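/- Let A, B ∈ B(H). Then for all real p ≥ 1, ω(A*B)^p ≤ (1/2)·‖A‖^p·‖B‖^p + (1/2)·ω(BA*)^p. -/

import Mathlib

/-!
Writing `⟪A*Bx, x⟫ = ⟪Bx, Ax⟫` and normalising `y = Ax / ‖Ax‖`, one has
`⟪Bx, Ax⟫ = ⟪A*y, x⟫ ⟪x, B*y⟫`. Buzano's inequality for the unit vector `x` bounds this by
`½ (‖A*y‖ ‖B*y‖ + |⟪A*y, B*y⟫|) ≤ ½ (‖A‖ ‖B‖ + ω(BA*))`, since `⟪A*y, B*y⟫ = ⟪BA*y, y⟫`.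
Taking the supremum over `x` gives the case `p = 1`, and convexity of `t ↦ t ^ p` on `[0, ∞)`
gives the general case.
-/

variable {H : Type*} [NormedAddCommGroup H] [InnerProductSpace ℂ H] [CompleteSpace H]

/-- The absolute value `|T| = (T*T)^(1/2)` of a bounded operator. -/
noncomputable def absOp (T : H →L[ℂ] H) : H →L[ℂ] H := CFC.sqrt (star T * T)

/-- The numerical radius `ω(T) = sup {|⟨Tx, x⟩| : ‖x‖ = 1}`. -/
noncomputable def numRad (T : H →L[ℂ] H) : ℝ :=
  sSup {r : ℝ | ∃ x : H, ‖x‖ = 1 ∧ r = ‖(inner ℂ (T x) x : ℂ)‖}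

open ContinuousLinearMap

section Buzano

variable {𝕜 E : Type*} [RCLike 𝕜] [NormedAddCommGroup E] [InnerProductSpace 𝕜 E]

local notation "⟪" x ", " y "⟫" => inner 𝕜 x y

theorem inner_reflection_span_singleton {e : E} (he : ‖e‖ = 1) (u v : E) :
    ⟪(𝕜 ∙ e).reflection u, v⟫ = 2 * (⟪u, e⟫ * ⟪e, v⟫) - ⟪u, v⟫ := by
  rw [Submodule.reflection_apply, Submodule.starProjection_unit_singleton 𝕜 he, inner_sub_left,
    two_smul, inner_add_left, inner_smul_left, inner_conj_symm]
  ring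

/-- Buzano's inequality. -/
theorem norm_inner_mul_inner_le_of_norm_eq_one {e : E} (he : ‖e‖ = 1) (u v : E) :
    ‖⟪u, e⟫ * ⟪e, v⟫‖ ≤ (‖u‖ * ‖v‖ + ‖⟪u, v⟫‖) / 2 := by
  have reflected : ‖2 * (⟪u, e⟫ * ⟪e, v⟫) - ⟪u, v⟫‖ ≤ ‖u‖ * ‖v‖ := by
    rw [← inner_reflection_span_singleton he, ← (𝕜 ∙ e).reflection.norm_map u]
    exact norm_inner_le_norm _ _
  have triangle := norm_sub_norm_le (2 * (⟪u, e⟫ * ⟪e, v⟫)) ⟪u, v⟫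
  rw [norm_mul, RCLike.norm_two] at triangle
  linarith

end Buzano

section NumRad

variable {E : Type*} [NormedAddCommGroup E] [InnerProductSpace ℂ E]

local notation "⟪" x ", " y "⟫" => inner ℂ x y

theorem numRad_bddAbove (T : E →L[ℂ] E) :
    BddAbove {r : ℝ | ∃ x : E, ‖x‖ = 1 ∧ r = ‖⟪T x, x⟫‖} := by
  refine ⟨‖T‖, ?_⟩
  rintro r ⟨x, hx, rfl⟩
  calc ‖⟪T x, x⟫‖ ≤ ‖T x‖ * ‖x‖ := norm_inner_le_norm _ _
    _ ≤ ‖T‖ * ‖x‖ * ‖x‖ := by gcongr; exact T.le_opNorm x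
    _ = ‖T‖ := by rw [hx, mul_one, mul_one]

theorem norm_inner_le_numRad (T : E →L[ℂ] E) {x : E} (hx : ‖x‖ = 1) :
    ‖⟪T x, x⟫‖ ≤ numRad T :=
  le_csSup (numRad_bddAbove T) ⟨x, hx, rfl⟩

theorem numRad_nonneg (T : E →L[ℂ] E) : 0 ≤ numRad T :=
  Real.sSup_nonneg <| by
    rintro r ⟨x, -, rfl⟩
    exact norm_nonneg _

theorem numRad_le {T : E →L[ℂ] E} {c : ℝ} (hc : 0 ≤ c)
    (h : ∀ x : E, ‖x‖ = 1 → ‖⟪T x, x⟫‖ ≤ c) : numRad T ≤ c := by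
  refine Real.sSup_le ?_ hc
  rintro r ⟨x, hx, rfl⟩
  exact h x hx

theorem norm_inner_star_mul_le (A B : H →L[ℂ] H) {x : H} (hx : ‖x‖ = 1) :
    ‖⟪(star A * B) x, x⟫‖ ≤ 1 / 2 * (‖A‖ * ‖B‖) + 1 / 2 * numRad (B * star A) := by
  rw [mul_apply_eq_comp, star_eq_adjoint, adjoint_inner_left]
  by_cases hAx : A x = 0
  · rw [hAx, inner_zero_right, norm_zero]
    have := numRad_nonneg (B * star A)
    positivity
  set y : H := (‖A x‖ : ℂ)⁻¹ • A x
  have hy : ‖y‖ = 1 := by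
    rw [norm_smul, norm_inv, Complex.norm_real, norm_norm,
      inv_mul_cancel₀ (norm_ne_zero_iff.mpr hAx)]
  have hAx_ne : (‖A x‖ : ℂ) ≠ 0 := by simpa using hAx
  have factor : ⟪B x, A x⟫ = ⟪adjoint A y, x⟫ * ⟪x, adjoint B y⟫ := by
    rw [adjoint_inner_left, adjoint_inner_right, inner_smul_left, inner_smul_right,
      inner_self_eq_norm_sq_to_K, map_inv₀, Complex.conj_ofReal, RCLike.ofReal_eq_complex_ofReal]
    field_simp
  have middle : ⟪adjoint A y, adjoint B y⟫ = ⟪(B * star A) y, y⟫ := by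
    rw [mul_apply_eq_comp, star_eq_adjoint, adjoint_inner_right]
  have norm_adjoint_apply_le (T : H →L[ℂ] H) : ‖adjoint T y‖ ≤ ‖T‖ := by
    simpa [hy] using (adjoint T).le_opNorm y
  calc ‖⟪B x, A x⟫‖
      ≤ (‖adjoint A y‖ * ‖adjoint B y‖ + ‖⟪adjoint A y, adjoint B y⟫‖) / 2 := by
        rw [factor]; exact norm_inner_mul_inner_le_of_norm_eq_one hx _ _
    _ ≤ (‖A‖ * ‖B‖ + numRad (B * star A)) / 2 := by
        rw [middle]
        gcongr
        · exact norm_adjoint_apply_le A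
        · exact norm_adjoint_apply_le B
        · exact norm_inner_le_numRad _ hy
    _ = 1 / 2 * (‖A‖ * ‖B‖) + 1 / 2 * numRad (B * star A) := by ring

theorem numRad_star_mul_le (A B : H →L[ℂ] H) :
    numRad (star A * B) ≤ 1 / 2 * (‖A‖ * ‖B‖) + 1 / 2 * numRad (B * star A) := by
  have := numRad_nonneg (B * star A)
  exact numRad_le (by positivity) fun x hx => norm_inner_star_mul_le A B hx

end NumRad

/-- Corollary: for `p ≥ 1`, `ω(A*B)^p ≤ (1/2)‖A‖^p ‖B‖^p + (1/2) ω(BA*)^p`. -/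
theorem numRad_rpow_split (A B : H →L[ℂ] H) (p : ℝ) (hp : 1 ≤ p) :
    numRad (star A * B) ^ p
      ≤ (1 / 2) * (‖A‖ ^ p * ‖B‖ ^ p) + (1 / 2) * numRad (B * star A) ^ p := by
  have hAB : 0 ≤ ‖A‖ * ‖B‖ := by positivity
  have hω := numRad_nonneg (B * star A)
  calc numRad (star A * B) ^ p
      ≤ (1 / 2 * (‖A‖ * ‖B‖) + 1 / 2 * numRad (B * star A)) ^ p :=
        Real.rpow_le_rpow (numRad_nonneg _) (numRad_star_mul_le A B) (by linarith)
    _ ≤ 1 / 2 * (‖A‖ * ‖B‖) ^ p + 1 / 2 * numRad (B * star A) ^ p :=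
        (convexOn_rpow hp).2 hAB hω (by norm_num) (by norm_num) (by norm_num)
    _ = (1 / 2) * (‖A‖ ^ p * ‖B‖ ^ p) + (1 / 2) * numRad (B * star A) ^ p := by
        rw [Real.mul_rpow (norm_nonneg _) (norm_nonneg _)]
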